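/- arXiv:1710.03041 — 5 statements merged into one kernel-verified Lean document; each statement's English description precedes it below -/
import Mathlib

section
/- For every colour c ∈ C₀ there are at least εn external edges of colour c. -/
/-
A multigraph on vertex type `V` is given by an edge type `E` with two endpoint
maps `fst snd : E → V` (no loops: `fst e ≠ snd e`); parallel edges are allowed
since distinct elements of `E` may have the same endpoints.  A colouring
`col : E → C` by a set `C` of `n` colours is proper if any two distinct edges
sharing a vertex get distinct colours.
-/

attribute [local instance] Classical.propDecidable

/-- The set of endpoints of an edge. -/
def endpts {V E : Type*} [DecidableEq V] (fst snd : E → V) (e : E) : Finset V :=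
  {fst e, snd e}

/-- A set of edges is a rainbow matching: pairwise vertex-disjoint edges with
pairwise distinct colours. -/
def IsRainbowMatching {V E C : Type*} [DecidableEq V] (fst snd : E → V) (col : E → C)
    (S : Finset E) : Prop :=
  (∀ e ∈ S, ∀ f ∈ S, e ≠ f → endpts fst snd e ∩ endpts fst snd f = ∅) ∧
  (∀ e ∈ S, ∀ f ∈ S, col e = col f → e = f)

/-- `V(M)`: the set of vertices covered by a set of edges `M`. -/
def mVerts {V E : Type*} [DecidableEq V] (fst snd : E → V) (M : Finset E) : Finset V :=
  M.biUnion (endpts fst snd)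

/-- The set of colours used by a set of edges `M`. -/
def mCols {E C : Type*} [DecidableEq C] (col : E → C) (M : Finset E) : Finset C :=
  M.image col

/-- `C₀`: the set of colours not used by `M`. -/
def C0 {E C : Type*} [Fintype C] [DecidableEq C] (col : E → C) (M : Finset E) : Finset C :=
  Finset.univ \ mCols col M

/-- An edge is external if one endpoint is in `V(M)` and the other is outside `V(M)`. -/
def IsExternal {V E : Type*} [DecidableEq V] (fst snd : E → V) (M : Finset E) (e : E) : Prop :=
  (fst e ∈ mVerts fst snd M ∧ snd e ∉ mVerts fst snd M) ∨
  (fst e ∉ mVerts fst snd M ∧ snd e ∈ mVerts fst snd M)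

/-- The number of external `C₀`-edges incident to a vertex `v`. -/
noncomputable def extC0deg {V E C : Type*} [DecidableEq V] [Fintype E] [Fintype C]
    [DecidableEq C] (fst snd : E → V) (col : E → C) (M : Finset E) (v : V) : ℕ :=
  (Finset.univ.filter fun f : E =>
    IsExternal fst snd M f ∧ col f ∈ C0 col M ∧ v ∈ endpts fst snd f).card

/-- `E₀`: the edges of `M` having an endpoint (a possible tail) incident to at least
`α|C₀|` external `C₀`-edges. -/
noncomputable def E0 {V E C : Type*} [DecidableEq V] [Fintype E] [Fintype C] [DecidableEq C]
    (fst snd : E → V) (col : E → C) (M : Finset E) (α : ℝ) : Finset E :=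
  M.filter fun e => ∃ v ∈ endpts fst snd e,
    α * ((C0 col M).card : ℝ) ≤ (extC0deg fst snd col M v : ℝ)

/-- `F`: the set of flexible colours, i.e. the colours of the edges of `E₀`. -/
noncomputable def Fcols {V E C : Type*} [DecidableEq V] [Fintype E] [Fintype C] [DecidableEq C]
    (fst snd : E → V) (col : E → C) (M : Finset E) (α : ℝ) : Finset C :=
  mCols col (E0 fst snd col M α)

/-- A good external edge: an external edge `e` whose colour lies in `F` such that the
edge `m_{c(e)}` of `M` of the same colour is incident to at least `α|C₀|/2` external
`C₀`-edges sharing no endpoint with `e`. -/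
noncomputable def IsGood {V E C : Type*} [DecidableEq V] [Fintype E] [Fintype C] [DecidableEq C]
    (fst snd : E → V) (col : E → C) (M : Finset E) (α : ℝ) (e : E) : Prop :=
  IsExternal fst snd M e ∧ col e ∈ Fcols fst snd col M α ∧
  ∃ g ∈ M, col g = col e ∧
    α * ((C0 col M).card : ℝ) / 2 ≤
      ((Finset.univ.filter fun f : E => IsExternal fst snd M f ∧ col f ∈ C0 col M ∧
        (endpts fst snd f ∩ endpts fst snd g).Nonempty ∧
        endpts fst snd f ∩ endpts fst snd e = ∅).card : ℝ)

/-- The number of good external `F`-edges incident to a vertex `v`. -/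
noncomputable def goodDeg {V E C : Type*} [DecidableEq V] [Fintype E] [Fintype C] [DecidableEq C]
    (fst snd : E → V) (col : E → C) (M : Finset E) (α : ℝ) (v : V) : ℕ :=
  (Finset.univ.filter fun f : E => IsGood fst snd col M α f ∧ v ∈ endpts fst snd f).card

/-- `E₁`: the edges of `M` having an endpoint (a possible tail) incident to at least
`α|F|` good external `F`-edges. -/
noncomputable def E1 {V E C : Type*} [DecidableEq V] [Fintype E] [Fintype C] [DecidableEq C]
    (fst snd : E → V) (col : E → C) (M : Finset E) (α : ℝ) : Finset E :=
  M.filter fun e => ∃ v ∈ endpts fst snd e,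
    α * ((Fcols fst snd col M α).card : ℝ) ≤ (goodDeg fst snd col M α v : ℝ)

/-- Given a choice `tl` of tail for each edge, the corresponding head. -/
def hdOf {V E : Type*} [DecidableEq V] (fst snd : E → V) (tl : E → V) (e : E) : V :=
  if tl e = fst e then snd e else fst e

/-- The endpoint of the edge `f` other than `v` (for `v` an endpoint of `f`). -/
def other {V E : Type*} [DecidableEq V] (fst snd : E → V) (v : V) (f : E) : V :=
  if fst f = v then snd f else fst f

/-- The condition for a vertex `v` to be a possible tail at step `i > 1` of the
reachability algorithm: for some `0 < j < i`, the number of `R_j`-edges `v u` with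
`u ∈ V₀ ∪ V₁ ∪ ⋯ ∪ V_{i-1}` is at least `α|R_j|`. -/
noncomputable def reachCond {V E C : Type*} [DecidableEq V] [Fintype V] [Fintype E] [Fintype C]
    [DecidableEq C] (fst snd : E → V) (col : E → C) (M : Finset E)
    (Vs : ℕ → Finset V) (Rs : ℕ → Finset C) (α : ℝ) (i : ℕ) (v : V) : Prop :=
  ∃ j ∈ Finset.Ioo 0 i, α * ((Rs j).card : ℝ) ≤
    ((Finset.univ.filter fun f : E => v ∈ endpts fst snd f ∧ col f ∈ Rs j ∧
      other fst snd v f ∈ (Finset.univ \ mVerts fst snd M) ∪ (Finset.Ioo 0 i).biUnion Vs).card : ℝ)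

/-- The set `T(S)` of twins (matching partners under `M`) of the vertices of `S`. -/
def twins {V E : Type*} [DecidableEq V] (fst snd : E → V) (M : Finset E) (S : Finset V) :
    Finset V :=
  M.biUnion fun g => (if fst g ∈ S then {snd g} else ∅) ∪ (if snd g ∈ S then {fst g} else ∅)

/-- For every colour `c ∈ C₀` there are at least `εn` external `c`-edges. -/
theorem stmt2
    {V E C : Type*} [Fintype V] [DecidableEq V] [Fintype E] [DecidableEq E]
    [Fintype C] [DecidableEq C]
    (ε k α : ℝ) (hε0 : 0 < ε) (hε1 : ε < 1/1000)
    (hk : k = (2:ℝ) ^ (20/ε)) (hα : α = ε/12)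
    (n : ℕ) (hn : (n:ℝ) > k^2)
    (fst snd : E → V) (col : E → C)
    (hloop : ∀ e : E, fst e ≠ snd e)
    (hproper : ∀ e f : E, e ≠ f → (endpts fst snd e ∩ endpts fst snd f).Nonempty →
      col e ≠ col f)
    (hC : Fintype.card C = n)
    (hmult : ∀ u v : V,
      ((Finset.univ.filter fun e : E => endpts fst snd e = ({u, v} : Finset V)).card : ℝ) ≤ n / k)
    (habund : ∀ c : C, (1+ε) * n ≤ ((Finset.univ.filter fun e : E => col e = c).card : ℝ))
    (M : Finset E) (hM : IsRainbowMatching fst snd col M)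
    (hMmax : ∀ S : Finset E, IsRainbowMatching fst snd col S → S.card ≤ M.card)
    (hMlt : (M.card : ℝ) < n - k)
    :
    ∀ c ∈ C0 col M,
      ε * n ≤ ((Finset.univ.filter fun e : E => IsExternal fst snd M e ∧ col e = c).card : ℝ) := by
  intro c hc
  have hcC0 : c ∉ mCols col M := by
    simpa [C0] using hc
  set Vm := mVerts fst snd M with hVm
  -- no colour-c edge with both endpoints outside Vm
  have hno : ∀ f : E, col f = c → fst f ∈ Vm ∨ snd f ∈ Vm := by
    intro f hf
    by_contra h
    push_neg at h
    obtain ⟨h1, h2⟩ := h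
    have hfM : f ∉ M := fun hfM => hcC0 (hf ▸ Finset.mem_image_of_mem col hfM)
    have hdisj : ∀ e ∈ M, endpts fst snd f ∩ endpts fst snd e = ∅ := by
      intro e heM
      apply Finset.eq_empty_iff_forall_notMem.2
      intro x hx
      rw [Finset.mem_inter] at hx
      have hxVm : x ∈ Vm := Finset.mem_biUnion.2 ⟨e, heM, hx.2⟩
      have : x = fst f ∨ x = snd f := by
        simpa [endpts, Finset.mem_insert] using hx.1
      rcases this with rfl | rfl
      · exact h1 hxVm
      · exact h2 hxVm
    have hrm : IsRainbowMatching fst snd col (insert f M) := by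
      constructor
      · intro e he g hg hne
        rcases Finset.mem_insert.1 he with rfl | heM
        · rcases Finset.mem_insert.1 hg with rfl | hgM
          · exact absurd rfl hne
          · exact hdisj g hgM
        · rcases Finset.mem_insert.1 hg with rfl | hgM
          · rw [Finset.inter_comm]; exact hdisj e heM
          · exact hM.1 e heM g hgM hne
      · intro e he g hg hcol
        rcases Finset.mem_insert.1 he with rfl | heM
        · rcases Finset.mem_insert.1 hg with rfl | hgM
          · rfl
          · exact absurd (hcol ▸ Finset.mem_image_of_mem col hgM) (hf ▸ hcC0)
        · rcases Finset.mem_insert.1 hg with rfl | hgM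
          · exact absurd (hcol ▸ Finset.mem_image_of_mem col heM) (hf ▸ hcC0)
          · exact hM.2 e heM g hgM hcol
    have := hMmax _ hrm
    rw [Finset.card_insert_of_notMem hfM] at this
    omega
  -- internal edges of colour c
  set I := Finset.univ.filter (fun f : E => col f = c ∧ fst f ∈ Vm ∧ snd f ∈ Vm) with hI
  have hIcard : I.card ≤ M.card := by
    have hIdisj : ∀ x ∈ I, ∀ y ∈ I, x ≠ y → Disjoint (endpts fst snd x) (endpts fst snd y) := by
      intro x hx y hy hxy
      rw [Finset.disjoint_iff_inter_eq_empty]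
      by_contra hne
      have hnon : (endpts fst snd x ∩ endpts fst snd y).Nonempty :=
        Finset.nonempty_iff_ne_empty.2 hne
      have hcx : col x = c := (Finset.mem_filter.1 hx).2.1
      have hcy : col y = c := (Finset.mem_filter.1 hy).2.1
      exact hproper x y hxy hnon (hcx.trans hcy.symm)
    have h1 : (I.biUnion (endpts fst snd)).card = 2 * I.card := by
      rw [Finset.card_biUnion hIdisj]
      rw [Finset.sum_congr rfl (fun x _ => show (endpts fst snd x).card = 2 from Finset.card_pair (hloop x))]
      simp [mul_comm]
    have h2 : I.biUnion (endpts fst snd) ⊆ Vm := by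
      intro x hx
      obtain ⟨f, hfI, hxf⟩ := Finset.mem_biUnion.1 hx
      have := (Finset.mem_filter.1 hfI).2
      have : x = fst f ∨ x = snd f := by
        simpa [endpts, Finset.mem_insert] using hxf
      rcases this with rfl | rfl
      · exact (Finset.mem_filter.1 hfI).2.2.1
      · exact (Finset.mem_filter.1 hfI).2.2.2
    have h3 : Vm.card ≤ 2 * M.card := by
      calc Vm.card ≤ ∑ e ∈ M, (endpts fst snd e).card := Finset.card_biUnion_le
        _ = 2 * M.card := by
          rw [Finset.sum_congr rfl (fun x _ => show (endpts fst snd x).card = 2 from Finset.card_pair (hloop x))]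
          simp [mul_comm]
    have := (Finset.card_le_card h2).trans h3
    omega
  -- every colour-c edge is external or internal
  set Ext := Finset.univ.filter (fun e : E => IsExternal fst snd M e ∧ col e = c) with hExt
  have hsub : Finset.univ.filter (fun f : E => col f = c) ⊆ Ext ∪ I := by
    intro f hf
    have hfc : col f = c := (Finset.mem_filter.1 hf).2
    rcases hno f hfc with h1 | h1
    · by_cases h2 : snd f ∈ Vm
      · exact Finset.mem_union_right _ (Finset.mem_filter.2 ⟨Finset.mem_univ _, hfc, h1, h2⟩)
      · exact Finset.mem_union_left _
          (Finset.mem_filter.2 ⟨Finset.mem_univ _, Or.inl ⟨h1, h2⟩, hfc⟩)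
    · by_cases h2 : fst f ∈ Vm
      · exact Finset.mem_union_right _ (Finset.mem_filter.2 ⟨Finset.mem_univ _, hfc, h2, h1⟩)
      · exact Finset.mem_union_left _
          (Finset.mem_filter.2 ⟨Finset.mem_univ _, Or.inr ⟨h2, h1⟩, hfc⟩)
  have hcount : (Finset.univ.filter (fun f : E => col f = c)).card ≤ Ext.card + M.card := by
    calc (Finset.univ.filter (fun f : E => col f = c)).card ≤ (Ext ∪ I).card :=
        Finset.card_le_card hsub
      _ ≤ Ext.card + I.card := Finset.card_union_le _ _
      _ ≤ Ext.card + M.card := by omega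
  have hk0 : (0:ℝ) < k := hk ▸ Real.rpow_pos_of_pos (by norm_num) _
  have habc := habund c
  have hcr : ((Finset.univ.filter (fun f : E => col f = c)).card : ℝ) ≤ (Ext.card : ℝ) + M.card := by
    exact_mod_cast hcount
  linarith
end

section
/- The set F of flexible colours satisfies |F| ≥ αn. -/
/-
A multigraph on vertex type `V` is given by an edge type `E` with two endpoint
maps `fst snd : E → V` (no loops: `fst e ≠ snd e`); parallel edges are allowed
since distinct elements of `E` may have the same endpoints.  A colouring
`col : E → C` by a set `C` of `n` colours is proper if any two distinct edges
sharing a vertex get distinct colours.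
-/

attribute [local instance] Classical.propDecidable

/-- **Lemma 3.1.** The set `F` of flexible colours satisfies `|F| ≥ αn`. -/
theorem stmt3
    {V E C : Type*} [Fintype V] [DecidableEq V] [Fintype E] [DecidableEq E]
    [Fintype C] [DecidableEq C]
    (ε k α : ℝ) (hε0 : 0 < ε) (hε1 : ε < 1/1000)
    (hk : k = (2:ℝ) ^ (20/ε)) (hα : α = ε/12)
    (n : ℕ) (hn : (n:ℝ) > k^2)
    (fst snd : E → V) (col : E → C)
    (hloop : ∀ e : E, fst e ≠ snd e)
    (hproper : ∀ e f : E, e ≠ f → (endpts fst snd e ∩ endpts fst snd f).Nonempty →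
      col e ≠ col f)
    (hC : Fintype.card C = n)
    (hmult : ∀ u v : V,
      ((Finset.univ.filter fun e : E => endpts fst snd e = ({u, v} : Finset V)).card : ℝ) ≤ n / k)
    (habund : ∀ c : C, (1+ε) * n ≤ ((Finset.univ.filter fun e : E => col e = c).card : ℝ))
    (M : Finset E) (hM : IsRainbowMatching fst snd col M)
    (hMmax : ∀ S : Finset E, IsRainbowMatching fst snd col S → S.card ≤ M.card)
    (hMlt : (M.card : ℝ) < n - k)
    :
    α * n ≤ ((Fcols fst snd col M α).card : ℝ) := by
  classical
  have hk0 : 0 < k := by rw [hk]; positivity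
  have hα0 : 0 < α := by rw [hα]; positivity
  have hMn : (M.card : ℝ) < n := by linarith
  have hMltn : M.card < n := by exact_mod_cast hMn
  have hnn : (0:ℝ) ≤ n := Nat.cast_nonneg n
  have hend : ∀ (e : E) (v : V), v ∈ endpts fst snd e ↔ v = fst e ∨ v = snd e := by
    intro e v; simp [endpts]
  have hend2 : ∀ e : E, (endpts fst snd e).card = 2 := by
    intro e
    rw [endpts, Finset.card_insert_of_notMem (by simpa using hloop e),
      Finset.card_singleton]
  have hsubVM : ∀ e ∈ M, endpts fst snd e ⊆ mVerts fst snd M := by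
    intro e he v hv
    exact Finset.mem_biUnion.mpr ⟨e, he, hv⟩
  have hmcard : (mCols col M).card = M.card :=
    Finset.card_image_of_injOn (fun e he f hf h => hM.2 e he f hf h)
  have hC0card : ((C0 col M).card : ℝ) = n - M.card := by
    rw [C0, Finset.card_sdiff_of_subset (Finset.subset_univ _), Finset.card_univ, hC, hmcard,
      Nat.cast_sub hMltn.le]
  have hC0pos : 0 < ((C0 col M).card : ℝ) := by rw [hC0card]; linarith
  -- Claim A: every edge whose colour is in C0 has an endpoint in V(M)
  have claimA : ∀ f : E, col f ∈ C0 col M →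
      fst f ∈ mVerts fst snd M ∨ snd f ∈ mVerts fst snd M := by
    intro f hf
    by_contra hcon
    push_neg at hcon
    obtain ⟨h1, h2⟩ := hcon
    have hfC : col f ∉ mCols col M := (Finset.mem_sdiff.mp hf).2
    have hfM : f ∉ M := fun hfM => hfC (Finset.mem_image_of_mem col hfM)
    have hdisj : ∀ g ∈ M, endpts fst snd f ∩ endpts fst snd g = ∅ := by
      intro g hg
      apply Finset.eq_empty_of_forall_notMem
      intro v hv
      rw [Finset.mem_inter] at hv
      have hvM : v ∈ mVerts fst snd M := hsubVM g hg hv.2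
      rcases (hend f v).mp hv.1 with rfl | rfl
      · exact h1 hvM
      · exact h2 hvM
    have hrb : IsRainbowMatching fst snd col (insert f M) := by
      constructor
      · intro e he g hg hne
        rcases Finset.mem_insert.mp he with he' | he' <;>
          rcases Finset.mem_insert.mp hg with hg' | hg'
        · exact absurd (he'.trans hg'.symm) hne
        · rw [he']; exact hdisj g hg'
        · rw [hg', Finset.inter_comm]; exact hdisj e he'
        · exact hM.1 e he' g hg' hne
      · intro e he g hg hcol
        rcases Finset.mem_insert.mp he with he' | he' <;>
          rcases Finset.mem_insert.mp hg with hg' | hg'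
        · rw [he', hg']
        · exfalso; apply hfC; rw [← he', hcol]; exact Finset.mem_image_of_mem col hg'
        · exfalso; apply hfC; rw [← hg', ← hcol]; exact Finset.mem_image_of_mem col he'
        · exact hM.2 e he' g hg' hcol
    have := hMmax _ hrb
    rw [Finset.card_insert_of_notMem hfM] at this
    omega
  -- per-colour count of external edges
  have claimX : ∀ c ∈ C0 col M, ε * n ≤
      ((Finset.univ.filter fun f : E => col f = c ∧ IsExternal fst snd M f).card : ℝ) := by
    intro c hc
    set Bc := Finset.univ.filter fun f : E => col f = c ∧ fst f ∈ mVerts fst snd M ∧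
      snd f ∈ mVerts fst snd M with hBcdef
    set Xc := Finset.univ.filter fun f : E => col f = c ∧ IsExternal fst snd M f with hXcdef
    have hsub : (Finset.univ.filter fun f : E => col f = c) ⊆ Bc ∪ Xc := by
      intro f hf
      have hfc : col f = c := (Finset.mem_filter.mp hf).2
      have hA := claimA f (hfc ▸ hc)
      rw [Finset.mem_union]
      by_cases h1 : fst f ∈ mVerts fst snd M <;>
        by_cases h2 : snd f ∈ mVerts fst snd M
      · exact Or.inl (Finset.mem_filter.mpr ⟨Finset.mem_univ f, hfc, h1, h2⟩)
      · exact Or.inr (Finset.mem_filter.mpr ⟨Finset.mem_univ f, hfc, Or.inl ⟨h1, h2⟩⟩)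
      · exact Or.inr (Finset.mem_filter.mpr ⟨Finset.mem_univ f, hfc, Or.inr ⟨h1, h2⟩⟩)
      · rcases hA with h | h
        · exact absurd h h1
        · exact absurd h h2
    have hBc : Bc.card ≤ M.card := by
      have hdisjB : ∀ f ∈ Bc, ∀ g ∈ Bc, f ≠ g →
          Disjoint (endpts fst snd f) (endpts fst snd g) := by
        intro f hf g hg hne
        rw [Finset.disjoint_iff_inter_eq_empty]
        by_contra hne2
        exact hproper f g hne (Finset.nonempty_iff_ne_empty.mpr hne2)
          (((Finset.mem_filter.mp hf).2.1).trans ((Finset.mem_filter.mp hg).2.1).symm)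
      have hcard : (Bc.biUnion (endpts fst snd)).card = 2 * Bc.card := by
        rw [Finset.card_biUnion hdisjB]
        rw [Finset.sum_congr rfl fun f _ => hend2 f, Finset.sum_const, smul_eq_mul,
          mul_comm]
      have hsubU : Bc.biUnion (endpts fst snd) ⊆ mVerts fst snd M := by
        intro v hv
        obtain ⟨f, hf, hvf⟩ := Finset.mem_biUnion.mp hv
        obtain ⟨-, -, h1, h2⟩ := Finset.mem_filter.mp hf
        rcases (hend f v).mp hvf with rfl | rfl
        · exact h1
        · exact h2
      have hVM : (mVerts fst snd M).card ≤ 2 * M.card := by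
        calc (mVerts fst snd M).card ≤ ∑ e ∈ M, (endpts fst snd e).card :=
              Finset.card_biUnion_le
        _ = 2 * M.card := by
            rw [Finset.sum_congr rfl fun f _ => hend2 f, Finset.sum_const, smul_eq_mul,
              mul_comm]
      have := Finset.card_le_card hsubU
      omega
    have habc := habund c
    have h1 : ((Finset.univ.filter fun f : E => col f = c).card : ℝ) ≤
        (Bc.card : ℝ) + (Xc.card : ℝ) := by
      have := (Finset.card_le_card hsub).trans (Finset.card_union_le Bc Xc)
      exact_mod_cast this
    have h2 : (Bc.card : ℝ) ≤ M.card := by exact_mod_cast hBc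
    linarith
  -- the set of external C0-edges
  set Ext := Finset.univ.filter fun f : E =>
    IsExternal fst snd M f ∧ col f ∈ C0 col M with hExtdef
  have hExtbi : Ext = (C0 col M).biUnion
      (fun c => Finset.univ.filter fun f : E => col f = c ∧ IsExternal fst snd M f) := by
    ext f
    simp only [hExtdef, Finset.mem_filter, Finset.mem_biUnion, Finset.mem_univ, true_and]
    constructor
    · rintro ⟨h1, h2⟩; exact ⟨col f, h2, rfl, h1⟩
    · rintro ⟨c, hc, rfl, h⟩; exact ⟨h, hc⟩
  have hExtlow : ε * n * ((C0 col M).card : ℝ) ≤ (Ext.card : ℝ) := by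
    have hdisjC : ∀ c ∈ C0 col M, ∀ c' ∈ C0 col M, c ≠ c' →
        Disjoint (Finset.univ.filter fun f : E => col f = c ∧ IsExternal fst snd M f)
          (Finset.univ.filter fun f : E => col f = c' ∧ IsExternal fst snd M f) := by
      intro c _ c' _ hne
      rw [Finset.disjoint_left]
      intro f hf hf'
      exact hne (((Finset.mem_filter.mp hf).2.1).symm.trans (Finset.mem_filter.mp hf').2.1)
    rw [hExtbi, Finset.card_biUnion hdisjC, Nat.cast_sum]
    calc ε * n * ((C0 col M).card : ℝ)
        = ∑ _c ∈ C0 col M, ε * n := by rw [Finset.sum_const, nsmul_eq_mul, mul_comm]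
      _ ≤ ∑ c ∈ C0 col M,
          ((Finset.univ.filter fun f : E => col f = c ∧ IsExternal fst snd M f).card : ℝ) :=
          Finset.sum_le_sum claimX
  -- double counting
  have hdegEq : ∀ v : V, extC0deg fst snd col M v =
      (Ext.filter fun f => v ∈ endpts fst snd f).card := by
    intro v
    unfold extC0deg
    congr 1
    ext f
    simp only [hExtdef, Finset.mem_filter, Finset.mem_univ, true_and]
    tauto
  have hsumExt : ∑ v ∈ mVerts fst snd M, extC0deg fst snd col M v = Ext.card := by
    have h1 : ∀ v, (Ext.filter fun f => v ∈ endpts fst snd f).card =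
        ∑ f ∈ Ext, ite (v ∈ endpts fst snd f) 1 0 := fun v => Finset.card_filter _ _
    calc ∑ v ∈ mVerts fst snd M, extC0deg fst snd col M v
        = ∑ v ∈ mVerts fst snd M, ∑ f ∈ Ext, ite (v ∈ endpts fst snd f) 1 0 := by
          refine Finset.sum_congr rfl fun v _ => ?_
          rw [hdegEq v, h1 v]
      _ = ∑ f ∈ Ext, ∑ v ∈ mVerts fst snd M, ite (v ∈ endpts fst snd f) 1 0 :=
          Finset.sum_comm
      _ = ∑ f ∈ Ext, ((mVerts fst snd M).filter fun v => v ∈ endpts fst snd f).card := by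
          refine Finset.sum_congr rfl fun f _ => ?_
          rw [Finset.card_filter]
      _ = ∑ _f ∈ Ext, 1 := by
          refine Finset.sum_congr rfl fun f hf => ?_
          have hfe : IsExternal fst snd M f := (Finset.mem_filter.mp hf).2.1
          rcases hfe with ⟨h1', h2'⟩ | ⟨h1', h2'⟩
          · have : ((mVerts fst snd M).filter fun v => v ∈ endpts fst snd f) = {fst f} := by
              ext v
              simp only [Finset.mem_filter, Finset.mem_singleton, hend f v]
              constructor
              · rintro ⟨hv, rfl | rfl⟩
                · rfl
                · exact absurd hv h2'
              · rintro rfl; exact ⟨h1', Or.inl rfl⟩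
            rw [this, Finset.card_singleton]
          · have : ((mVerts fst snd M).filter fun v => v ∈ endpts fst snd f) = {snd f} := by
              ext v
              simp only [Finset.mem_filter, Finset.mem_singleton, hend f v]
              constructor
              · rintro ⟨hv, rfl | rfl⟩
                · exact absurd hv h1'
                · rfl
              · rintro rfl; exact ⟨h2', Or.inr rfl⟩
            rw [this, Finset.card_singleton]
      _ = Ext.card := by rw [Finset.sum_const, smul_eq_mul, mul_one]
  -- degree bounds
  have hdegC0 : ∀ v : V, extC0deg fst snd col M v ≤ (C0 col M).card := by
    intro v
    unfold extC0deg
    apply Finset.card_le_card_of_injOn col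
    · intro f hf
      exact (Finset.mem_filter.mp hf).2.2.1
    · intro f hf g hg hcol
      simp only [Finset.coe_filter, Set.mem_setOf_eq, Finset.mem_univ, true_and] at hf hg
      by_contra hne
      exact hproper f g hne ⟨v, Finset.mem_inter.mpr ⟨hf.2.2, hg.2.2⟩⟩ hcol
  set E0' := E0 fst snd col M α with hE0def
  have hE0sub : E0' ⊆ M := Finset.filter_subset _ _
  have hMdisj : (M : Set E).PairwiseDisjoint (endpts fst snd) := by
    intro e he f hf hne
    exact Finset.disjoint_iff_inter_eq_empty.mpr (hM.1 e he f hf hne)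
  have hsumbi : ∑ v ∈ mVerts fst snd M, ((extC0deg fst snd col M v : ℝ)) =
      ∑ e ∈ M, ∑ v ∈ endpts fst snd e, (extC0deg fst snd col M v : ℝ) := by
    rw [mVerts, Finset.sum_biUnion hMdisj]
  have hinner1 : ∀ e : E, ∑ v ∈ endpts fst snd e, (extC0deg fst snd col M v : ℝ) ≤
      2 * ((C0 col M).card : ℝ) := by
    intro e
    calc ∑ v ∈ endpts fst snd e, (extC0deg fst snd col M v : ℝ)
        ≤ ∑ _v ∈ endpts fst snd e, ((C0 col M).card : ℝ) :=
          Finset.sum_le_sum fun v _ => by exact_mod_cast hdegC0 v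
      _ = 2 * ((C0 col M).card : ℝ) := by
          rw [Finset.sum_const, hend2 e, nsmul_eq_mul]; norm_num
  have hinner2 : ∀ e ∈ M \ E0', ∑ v ∈ endpts fst snd e, (extC0deg fst snd col M v : ℝ) ≤
      2 * (α * ((C0 col M).card : ℝ)) := by
    intro e he
    obtain ⟨heM, heE0⟩ := Finset.mem_sdiff.mp he
    have hne : ∀ v ∈ endpts fst snd e,
        (extC0deg fst snd col M v : ℝ) ≤ α * ((C0 col M).card : ℝ) := by
      intro v hv
      by_contra hlt
      push_neg at hlt
      exact heE0 (Finset.mem_filter.mpr ⟨heM, v, hv, hlt.le⟩)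
    calc ∑ v ∈ endpts fst snd e, (extC0deg fst snd col M v : ℝ)
        ≤ ∑ _v ∈ endpts fst snd e, α * ((C0 col M).card : ℝ) := Finset.sum_le_sum hne
      _ = 2 * (α * ((C0 col M).card : ℝ)) := by
          rw [Finset.sum_const, hend2 e, nsmul_eq_mul]; norm_num
  have hmain : (Ext.card : ℝ) ≤
      (E0'.card : ℝ) * (2 * ((C0 col M).card : ℝ)) +
      (M.card : ℝ) * (2 * (α * ((C0 col M).card : ℝ))) := by
    have hcast : (Ext.card : ℝ) = ∑ v ∈ mVerts fst snd M, (extC0deg fst snd col M v : ℝ) := by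
      rw [← hsumExt, Nat.cast_sum]
    rw [hcast, hsumbi, ← Finset.sum_sdiff hE0sub]
    have b1 : ∑ e ∈ E0', ∑ v ∈ endpts fst snd e, (extC0deg fst snd col M v : ℝ) ≤
        (E0'.card : ℝ) * (2 * ((C0 col M).card : ℝ)) := by
      calc ∑ e ∈ E0', ∑ v ∈ endpts fst snd e, (extC0deg fst snd col M v : ℝ)
          ≤ ∑ _e ∈ E0', 2 * ((C0 col M).card : ℝ) := Finset.sum_le_sum fun e _ => hinner1 e
        _ = (E0'.card : ℝ) * (2 * ((C0 col M).card : ℝ)) := by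
            rw [Finset.sum_const, nsmul_eq_mul]
    have b2 : ∑ e ∈ M \ E0', ∑ v ∈ endpts fst snd e, (extC0deg fst snd col M v : ℝ) ≤
        (M.card : ℝ) * (2 * (α * ((C0 col M).card : ℝ))) := by
      calc ∑ e ∈ M \ E0', ∑ v ∈ endpts fst snd e, (extC0deg fst snd col M v : ℝ)
          ≤ ∑ _e ∈ M \ E0', 2 * (α * ((C0 col M).card : ℝ)) := Finset.sum_le_sum hinner2
        _ = ((M \ E0').card : ℝ) * (2 * (α * ((C0 col M).card : ℝ))) := by
            rw [Finset.sum_const, nsmul_eq_mul]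
        _ ≤ (M.card : ℝ) * (2 * (α * ((C0 col M).card : ℝ))) := by
            have hc : ((M \ E0').card : ℝ) ≤ (M.card : ℝ) := by
              exact_mod_cast Finset.card_le_card (Finset.sdiff_subset)
            have hpos : 0 ≤ 2 * (α * ((C0 col M).card : ℝ)) := by positivity
            exact mul_le_mul_of_nonneg_right hc hpos
    linarith
  -- extract the bound on |E0|
  have hkey : ε * n ≤ 2 * (E0'.card : ℝ) + 2 * α * (M.card : ℝ) := by
    have h := hExtlow.trans hmain
    have h2 : ε * n * ((C0 col M).card : ℝ) ≤
        (2 * (E0'.card : ℝ) + 2 * α * (M.card : ℝ)) * ((C0 col M).card : ℝ) := by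
      nlinarith
    exact le_of_mul_le_mul_right h2 hC0pos
  have hE0card : α * n ≤ (E0'.card : ℝ) := by
    have hm : 2 * α * (M.card : ℝ) ≤ 2 * α * n :=
      mul_le_mul_of_nonneg_left hMn.le (by positivity)
    rw [hα] at *
    linarith
  -- |F| = |E0|
  have hFcard : (Fcols fst snd col M α).card = E0'.card := by
    rw [Fcols, mCols]
    exact Finset.card_image_of_injOn fun e he f hf h =>
      hM.2 e (hE0sub he) f (hE0sub hf) h
  rw [hFcard]
  exact hE0card
end

section
/- For every flexible colour c ∈ F, there is at most one edge of colour c with both endpoints in V₀. -/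
/-
A multigraph on vertex type `V` is given by an edge type `E` with two endpoint
maps `fst snd : E → V` (no loops: `fst e ≠ snd e`); parallel edges are allowed
since distinct elements of `E` may have the same endpoints.  A colouring
`col : E → C` by a set `C` of `n` colours is proper if any two distinct edges
sharing a vertex get distinct colours.
-/

attribute [local instance] Classical.propDecidable

/-- For every flexible colour `c ∈ F` there is at most one `c`-edge with both
endpoints in `V₀`. -/
theorem stmt4
    {V E C : Type*} [Fintype V] [DecidableEq V] [Fintype E] [DecidableEq E]
    [Fintype C] [DecidableEq C]
    (ε k α : ℝ) (hε0 : 0 < ε) (hε1 : ε < 1/1000)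
    (hk : k = (2:ℝ) ^ (20/ε)) (hα : α = ε/12)
    (n : ℕ) (hn : (n:ℝ) > k^2)
    (fst snd : E → V) (col : E → C)
    (hloop : ∀ e : E, fst e ≠ snd e)
    (hproper : ∀ e f : E, e ≠ f → (endpts fst snd e ∩ endpts fst snd f).Nonempty →
      col e ≠ col f)
    (hC : Fintype.card C = n)
    (hmult : ∀ u v : V,
      ((Finset.univ.filter fun e : E => endpts fst snd e = ({u, v} : Finset V)).card : ℝ) ≤ n / k)
    (habund : ∀ c : C, (1+ε) * n ≤ ((Finset.univ.filter fun e : E => col e = c).card : ℝ))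
    (M : Finset E) (hM : IsRainbowMatching fst snd col M)
    (hMmax : ∀ S : Finset E, IsRainbowMatching fst snd col S → S.card ≤ M.card)
    (hMlt : (M.card : ℝ) < n - k)
    :
    ∀ c ∈ Fcols fst snd col M α,
      (Finset.univ.filter fun e : E => col e = c ∧ fst e ∉ mVerts fst snd M ∧
        snd e ∉ mVerts fst snd M).card ≤ 1 := by
  intro c hc
  by_contra hcard
  push_neg at hcard
  obtain ⟨e1, he1m, e2, he2m, hne12⟩ := Finset.one_lt_card.mp hcard
  simp only [Finset.mem_filter, Finset.mem_univ, true_and] at he1m he2m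
  obtain ⟨hce1, hfe1, hse1⟩ := he1m
  obtain ⟨hce2, hfe2, hse2⟩ := he2m
  obtain ⟨g, hgE0, hgc⟩ := Finset.mem_image.mp hc
  have hgM : g ∈ M := Finset.mem_of_mem_filter g hgE0
  obtain ⟨t, htg, htdeg⟩ := (Finset.mem_filter.mp hgE0).2
  have hk0 : (0:ℝ) < k := by rw [hk]; positivity
  have hα0 : (0:ℝ) < α := by rw [hα]; linarith
  have hMcard : (M.card : ℝ) < n := by linarith
  have hMn : M.card < n := by exact_mod_cast hMcard
  have hC0pos : 0 < (C0 col M).card := by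
    have h1 : (mCols col M).card ≤ M.card := Finset.card_image_le
    have h2 : (C0 col M).card = Fintype.card C - (mCols col M).card := by
      rw [C0, Finset.card_sdiff_of_subset (Finset.subset_univ _), Finset.card_univ]
    omega
  have hdegpos : 0 < extC0deg fst snd col M t := by
    have h1 : (0:ℝ) < α * ((C0 col M).card : ℝ) :=
      mul_pos hα0 (by exact_mod_cast hC0pos)
    have h2 : (0:ℝ) < (extC0deg fst snd col M t : ℝ) := lt_of_lt_of_le h1 htdeg
    exact_mod_cast h2
  rw [extC0deg] at hdegpos
  obtain ⟨f, hf⟩ := Finset.card_pos.mp hdegpos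
  simp only [Finset.mem_filter, Finset.mem_univ, true_and] at hf
  obtain ⟨hfext, hfC0, htf⟩ := hf
  have htM : t ∈ mVerts fst snd M := Finset.mem_biUnion.mpr ⟨g, hgM, htg⟩
  set w := other fst snd t f with hw
  have htf' : t = fst f ∨ t = snd f := by simpa [endpts] using htf
  have hkey : (fst f = t ∧ snd f = w) ∨ (snd f = t ∧ fst f = w) := by
    by_cases hft : fst f = t
    · exact Or.inl ⟨hft, by simp [hw, other, hft]⟩
    · have h2 : snd f = t := by tauto
      exact Or.inr ⟨h2, by simp [hw, other, hft]⟩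
  have hwnm : w ∉ mVerts fst snd M := by
    rcases hkey with ⟨h1, h2⟩ | ⟨h1, h2⟩ <;> rcases hfext with ⟨ha, hb⟩ | ⟨ha, hb⟩
    · exact h2 ▸ hb
    · exact absurd (h1 ▸ htM) ha
    · exact absurd (h1 ▸ htM) hb
    · exact h2 ▸ ha
  have hendf : ∀ x ∈ endpts fst snd f, x = t ∨ x = w := by
    intro x hx
    have hx' : x = fst f ∨ x = snd f := by simpa [endpts] using hx
    rcases hx' with rfl | rfl <;> rcases hkey with ⟨h1, h2⟩ | ⟨h1, h2⟩ <;> tauto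
  have hmv : ∀ h ∈ M, ∀ x ∈ endpts fst snd h, x ∈ mVerts fst snd M :=
    fun h hh x hx => Finset.mem_biUnion.mpr ⟨h, hh, hx⟩
  have colfC0 : col f ∉ mCols col M := (Finset.mem_sdiff.mp hfC0).2
  have hcM : c ∈ mCols col M := hgc ▸ Finset.mem_image_of_mem col hgM
  have htonly : ∀ h ∈ M, h ≠ g → t ∉ endpts fst snd h := by
    intro h hh hneq hth
    have hdis := hM.1 g hgM h hh (Ne.symm hneq)
    have : t ∈ endpts fst snd g ∩ endpts fst snd h := Finset.mem_inter.mpr ⟨htg, hth⟩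
    rw [hdis] at this
    exact absurd this (Finset.notMem_empty t)
  have key : ∀ e : E, col e = c → fst e ∉ mVerts fst snd M → snd e ∉ mVerts fst snd M →
      w ∉ endpts fst snd e → False := by
    intro e hce hfe hse hwe
    have henm : ∀ x ∈ endpts fst snd e, x ∉ mVerts fst snd M := by
      intro x hx
      have hx' : x = fst e ∨ x = snd e := by simpa [endpts] using hx
      rcases hx' with rfl | rfl <;> assumption
    have heM : e ∉ M := fun hem => hfe (hmv e hem _ (by simp [endpts]))
    have hfM : f ∉ M := fun hfm => colfC0 (Finset.mem_image_of_mem col hfm)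
    have hfne : f ≠ e := by
      intro h
      apply colfC0
      rw [h, hce]
      exact hcM
    set S : Finset E := insert f (insert e (M.erase g)) with hS
    have hSrm : IsRainbowMatching fst snd col S := by
      constructor
      · intro a ha b hb hab
        have Dfe : endpts fst snd f ∩ endpts fst snd e = ∅ := by
          rw [Finset.eq_empty_iff_forall_notMem]
          intro x hx
          obtain ⟨hx1, hx2⟩ := Finset.mem_inter.mp hx
          rcases hendf x hx1 with rfl | rfl
          · exact henm _ hx2 htM
          · exact hwe hx2
        have Dfh : ∀ h ∈ M.erase g, endpts fst snd f ∩ endpts fst snd h = ∅ := by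
          intro h hh
          obtain ⟨hhg, hhM⟩ := Finset.mem_erase.mp hh
          rw [Finset.eq_empty_iff_forall_notMem]
          intro x hx
          obtain ⟨hx1, hx2⟩ := Finset.mem_inter.mp hx
          rcases hendf x hx1 with rfl | rfl
          · exact htonly h hhM hhg hx2
          · exact hwnm (hmv h hhM _ hx2)
        have Deh : ∀ h ∈ M, endpts fst snd e ∩ endpts fst snd h = ∅ := by
          intro h hh
          rw [Finset.eq_empty_iff_forall_notMem]
          intro x hx
          obtain ⟨hx1, hx2⟩ := Finset.mem_inter.mp hx
          exact henm _ hx1 (hmv h hh _ hx2)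
        simp only [hS, Finset.mem_insert] at ha hb
        rcases ha with rfl | rfl | ha <;> rcases hb with rfl | rfl | hb
        · exact absurd rfl hab
        · exact Dfe
        · exact Dfh _ hb
        · rw [Finset.inter_comm]; exact Dfe
        · exact absurd rfl hab
        · exact Deh _ (Finset.mem_of_mem_erase hb)
        · rw [Finset.inter_comm]; exact Dfh _ ha
        · rw [Finset.inter_comm]; exact Deh _ (Finset.mem_of_mem_erase ha)
        · exact hM.1 a (Finset.mem_of_mem_erase ha) b (Finset.mem_of_mem_erase hb) hab
      · intro a ha b hb hcol
        simp only [hS, Finset.mem_insert] at ha hb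
        rcases ha with rfl | rfl | ha <;> rcases hb with rfl | rfl | hb
        · rfl
        · exact absurd hcM (by rw [← hce, ← hcol]; exact colfC0)
        · exact absurd (Finset.mem_image_of_mem col (Finset.mem_of_mem_erase hb))
            (hcol ▸ colfC0)
        · exact absurd hcM (by rw [← hce, hcol]; exact colfC0)
        · rfl
        · obtain ⟨hbg, hbM⟩ := Finset.mem_erase.mp hb
          exact absurd (hM.2 b hbM g hgM (by rw [← hcol, hce, hgc])) hbg
        · exact absurd (Finset.mem_image_of_mem col (Finset.mem_of_mem_erase ha))
            (hcol ▸ colfC0)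
        · obtain ⟨hag, haM⟩ := Finset.mem_erase.mp ha
          exact absurd (hM.2 a haM g hgM (by rw [hcol, hce, hgc])) hag
        · exact hM.2 a (Finset.mem_of_mem_erase ha) b (Finset.mem_of_mem_erase hb) hcol
    have hScard : S.card = M.card + 1 := by
      have h1 : e ∉ M.erase g := fun h => heM (Finset.mem_of_mem_erase h)
      have h2 : f ∉ insert e (M.erase g) := by
        simp only [Finset.mem_insert]
        rintro (rfl | hf2)
        · exact hfne rfl
        · exact hfM (Finset.mem_of_mem_erase hf2)
      rw [hS, Finset.card_insert_of_notMem h2, Finset.card_insert_of_notMem h1,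
        Finset.card_erase_of_mem hgM]
      have : 1 ≤ M.card := Finset.card_pos.mpr ⟨g, hgM⟩
      omega
    have := hMmax S hSrm
    omega
  have hdis : endpts fst snd e1 ∩ endpts fst snd e2 = ∅ := by
    by_contra h
    exact hproper e1 e2 hne12 (Finset.nonempty_iff_ne_empty.mpr h) (hce1.trans hce2.symm)
  by_cases hwe1 : w ∈ endpts fst snd e1
  · apply key e2 hce2 hfe2 hse2
    intro hwe2
    have : w ∈ endpts fst snd e1 ∩ endpts fst snd e2 := Finset.mem_inter.mpr ⟨hwe1, hwe2⟩
    rw [hdis] at this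
    exact absurd this (Finset.notMem_empty w)
  · exact key e1 hce1 hfe1 hse1 hwe1
end

section
/- The number of external edges whose colour lies in F is at least ε|F|n/2. -/
/-
A multigraph on vertex type `V` is given by an edge type `E` with two endpoint
maps `fst snd : E → V` (no loops: `fst e ≠ snd e`); parallel edges are allowed
since distinct elements of `E` may have the same endpoints.  A colouring
`col : E → C` by a set `C` of `n` colours is proper if any two distinct edges
sharing a vertex get distinct colours.
-/

attribute [local instance] Classical.propDecidable

set_option linter.unusedSectionVars false
set_option linter.unusedVariables false

section Aux

variable {V E C : Type*} [Fintype V] [DecidableEq V] [Fintype E] [DecidableEq E]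
    [Fintype C] [DecidableEq C]
variable (fst snd : E → V) (col : E → C)

lemma aux_mem_endpts (x : V) (e : E) :
    x ∈ endpts fst snd e ↔ x = fst e ∨ x = snd e := by simp [endpts]

lemma aux_endpts_subset {M : Finset E} {g : E} (hg : g ∈ M) :
    endpts fst snd g ⊆ mVerts fst snd M := fun x hx =>
  Finset.mem_biUnion.2 ⟨g, hg, hx⟩

lemma aux_exchange (hproper : ∀ e f : E, e ≠ f →
      (endpts fst snd e ∩ endpts fst snd f).Nonempty → col e ≠ col f)
    (M : Finset E) (hM : IsRainbowMatching fst snd col M)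
    (hMmax : ∀ S : Finset E, IsRainbowMatching fst snd col S → S.card ≤ M.card)
    (g : E) (hg : g ∈ M) (v : V) (hv : v ∈ endpts fst snd g)
    (f : E) (hf_ext : IsExternal fst snd M f) (hfc : col f ∈ C0 col M)
    (hvf : v ∈ endpts fst snd f)
    (e : E) (hce : col e = col g)
    (he_out : ∀ x ∈ endpts fst snd e, x ∉ mVerts fst snd M)
    (hfe_disj : ∀ x ∈ endpts fst snd f, x ∉ endpts fst snd e) : False := by
  have hvM : v ∈ mVerts fst snd M := aux_endpts_subset fst snd hg hv
  have henotM : e ∉ M := fun h =>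
    he_out (fst e) (by simp [endpts]) (aux_endpts_subset fst snd h (by simp [endpts]))
  have hfcol : col f ∉ mCols col M := by
    have := Finset.mem_sdiff.1 hfc; exact this.2
  have hfM : f ∉ M := fun h => hfcol (Finset.mem_image.2 ⟨f, h, rfl⟩)
  have hcg : col g ∈ mCols col M := Finset.mem_image.2 ⟨g, hg, rfl⟩
  have hfe : f ≠ e := fun h => hfcol (by rw [h, hce]; exact hcg)
  -- f's endpoints: one is v (in mVerts), the other not in mVerts
  have hf_struct : ∀ x ∈ endpts fst snd f, x = v ∨ x ∉ mVerts fst snd M := by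
    intro x hx
    rcases hf_ext with ⟨h1, h2⟩ | ⟨h1, h2⟩
    · have hvfst : v = fst f := by
        rcases (aux_mem_endpts fst snd v f).1 hvf with h | h
        · exact h
        · exact absurd (h ▸ hvM) h2
      rcases (aux_mem_endpts fst snd x f).1 hx with h | h
      · exact Or.inl (h.trans hvfst.symm)
      · exact Or.inr (h ▸ h2)
    · have hvsnd : v = snd f := by
        rcases (aux_mem_endpts fst snd v f).1 hvf with h | h
        · exact absurd (h ▸ hvM) h1
        · exact h
      rcases (aux_mem_endpts fst snd x f).1 hx with h | h
      · exact Or.inr (h ▸ h1)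
      · exact Or.inl (h.trans hvsnd.symm)
  -- disjointness of f from edges of M.erase g
  have hf_disj : ∀ g' ∈ M.erase g, endpts fst snd f ∩ endpts fst snd g' = ∅ := by
    intro g' hg'
    have hg'M : g' ∈ M := Finset.mem_of_mem_erase hg'
    have hne : g ≠ g' := fun h => (Finset.ne_of_mem_erase hg') h.symm
    have hgg' : endpts fst snd g ∩ endpts fst snd g' = ∅ := hM.1 g hg g' hg'M hne
    apply Finset.eq_empty_iff_forall_notMem.2
    intro x hx
    have hx1 := Finset.mem_inter.1 hx
    rcases hf_struct x hx1.1 with h | h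
    · subst h
      exact (Finset.eq_empty_iff_forall_notMem.1 hgg') x (Finset.mem_inter.2 ⟨hv, hx1.2⟩)
    · exact h (aux_endpts_subset fst snd hg'M hx1.2)
  have he_disj : ∀ g' ∈ M.erase g, endpts fst snd e ∩ endpts fst snd g' = ∅ := by
    intro g' hg'
    apply Finset.eq_empty_iff_forall_notMem.2
    intro x hx
    have hx1 := Finset.mem_inter.1 hx
    exact he_out x hx1.1 (aux_endpts_subset fst snd (Finset.mem_of_mem_erase hg') hx1.2)
  have hfe_disj' : endpts fst snd f ∩ endpts fst snd e = ∅ := by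
    apply Finset.eq_empty_iff_forall_notMem.2
    intro x hx
    have hx1 := Finset.mem_inter.1 hx
    exact hfe_disj x hx1.1 hx1.2
  set M' := insert f (insert e (M.erase g)) with hM'def
  have hmemM' : ∀ a, a ∈ M' ↔ a = f ∨ a = e ∨ a ∈ M.erase g := by
    intro a; simp [hM'def, or_assoc]
  -- rainbow matching
  have dfe2 : endpts fst snd e ∩ endpts fst snd f = ∅ := by
    rw [Finset.inter_comm]; exact hfe_disj'
  have hRM : IsRainbowMatching fst snd col M' := by
    constructor
    · intro p hp q hq hpq
      rcases (hmemM' p).1 hp with hp' | hp' | hp' <;>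
        rcases (hmemM' q).1 hq with hq' | hq' | hq'
      · exact absurd (hp'.trans hq'.symm) hpq
      · rw [hp', hq']; exact hfe_disj'
      · rw [hp']; exact hf_disj q hq'
      · rw [hp', hq']; exact dfe2
      · exact absurd (hp'.trans hq'.symm) hpq
      · rw [hp']; exact he_disj q hq'
      · rw [hq', Finset.inter_comm]; exact hf_disj p hp'
      · rw [hq', Finset.inter_comm]; exact he_disj p hp'
      · exact hM.1 p (Finset.mem_of_mem_erase hp') q (Finset.mem_of_mem_erase hq') hpq
    · intro p hp q hq hcol
      by_contra hpq
      have base : ∀ b : E, b = e ∨ b ∈ M.erase g → col f ≠ col b := by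
        intro b hb
        rcases hb with rfl | hb
        · rw [hce]; exact fun h => hfcol (h ▸ hcg)
        · exact fun h => hfcol (h ▸ Finset.mem_image.2 ⟨b, Finset.mem_of_mem_erase hb, rfl⟩)
      have base2 : ∀ b ∈ M.erase g, col e ≠ col b := by
        intro b hb h
        have : b = g := hM.2 b (Finset.mem_of_mem_erase hb) g hg (by rw [← h, hce])
        exact (Finset.ne_of_mem_erase hb) this
      rcases (hmemM' p).1 hp with hp' | hp' | hp' <;>
        rcases (hmemM' q).1 hq with hq' | hq' | hq'
      · exact hpq (hp'.trans hq'.symm)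
      · exact base e (Or.inl rfl) (by rw [← hp', ← hq'] at *; exact hcol)
      · exact base q (Or.inr hq') (by rw [← hp']; exact hcol)
      · exact base e (Or.inl rfl) (by rw [← hq', ← hp'] at *; exact hcol.symm)
      · exact hpq (hp'.trans hq'.symm)
      · exact base2 q hq' (by rw [← hp']; exact hcol)
      · exact base p (Or.inr hp') (by rw [← hq']; exact hcol.symm)
      · exact base2 p hp' (by rw [← hq']; exact hcol.symm)
      · exact hpq (hM.2 p (Finset.mem_of_mem_erase hp') q (Finset.mem_of_mem_erase hq') hcol)
  -- cardinality
  have h1 : e ∉ M.erase g := fun h => henotM (Finset.mem_of_mem_erase h)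
  have h2 : f ∉ insert e (M.erase g) := by
    simp only [Finset.mem_insert]
    rintro (rfl | h)
    · exact hfe rfl
    · exact hfM (Finset.mem_of_mem_erase h)
  have hcard : M'.card = M.card + 1 := by
    rw [hM'def, Finset.card_insert_of_notMem h2, Finset.card_insert_of_notMem h1,
      Finset.card_erase_of_mem hg]
    have : 1 ≤ M.card := Finset.card_pos.2 ⟨g, hg⟩
    omega
  have := hMmax M' hRM
  omega

end Aux

section Aux2

variable {V E C : Type*} [Fintype V] [DecidableEq V] [Fintype E] [DecidableEq E]
    [Fintype C] [DecidableEq C]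
variable (fst snd : E → V) (col : E → C)

lemma aux_out_le_one
    (hproper : ∀ e f : E, e ≠ f →
      (endpts fst snd e ∩ endpts fst snd f).Nonempty → col e ≠ col f)
    (M : Finset E) (hM : IsRainbowMatching fst snd col M)
    (hMmax : ∀ S : Finset E, IsRainbowMatching fst snd col S → S.card ≤ M.card)
    (g : E) (hg : g ∈ M) (v : V) (hv : v ∈ endpts fst snd g)
    (hdeg : 0 < extC0deg fst snd col M v) :
    (Finset.univ.filter fun e : E => col e = col g ∧
      ∀ x ∈ endpts fst snd e, x ∉ mVerts fst snd M).card ≤ 1 := by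
  by_contra hcon
  push_neg at hcon
  obtain ⟨e₁, he₁, e₂, he₂, hne⟩ := Finset.one_lt_card.1 hcon
  rw [Finset.mem_filter] at he₁ he₂
  obtain ⟨-, hc₁, ho₁⟩ := he₁
  obtain ⟨-, hc₂, ho₂⟩ := he₂
  have hdisj12 : endpts fst snd e₁ ∩ endpts fst snd e₂ = ∅ := by
    by_contra h
    exact hproper e₁ e₂ hne (Finset.nonempty_iff_ne_empty.2 h) (hc₁.trans hc₂.symm)
  obtain ⟨f, hf⟩ := Finset.card_pos.1 hdeg
  rw [Finset.mem_filter] at hf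
  obtain ⟨-, hf_ext, hfc, hvf⟩ := hf
  -- the unique endpoint of f outside mVerts
  obtain ⟨u, hu_out, hu_uniq⟩ : ∃ u, u ∉ mVerts fst snd M ∧
      ∀ x ∈ endpts fst snd f, x ∉ mVerts fst snd M → x = u := by
    rcases hf_ext with ⟨h1, h2⟩ | ⟨h1, h2⟩
    · exact ⟨snd f, h2, fun x hx hxm => by
        rcases (aux_mem_endpts fst snd x f).1 hx with h | h
        · exact absurd (h ▸ h1) hxm
        · exact h⟩
    · exact ⟨fst f, h1, fun x hx hxm => by
        rcases (aux_mem_endpts fst snd x f).1 hx with h | h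
        · exact h
        · exact absurd (h ▸ h2) hxm⟩
  obtain ⟨e, hce, heo, hue⟩ : ∃ e, col e = col g ∧
      (∀ x ∈ endpts fst snd e, x ∉ mVerts fst snd M) ∧ u ∉ endpts fst snd e := by
    by_cases h : u ∈ endpts fst snd e₁
    · refine ⟨e₂, hc₂, ho₂, fun h2 => ?_⟩
      exact (Finset.eq_empty_iff_forall_notMem.1 hdisj12) u (Finset.mem_inter.2 ⟨h, h2⟩)
    · exact ⟨e₁, hc₁, ho₁, h⟩
  refine aux_exchange fst snd col hproper M hM hMmax g hg v hv f hf_ext hfc hvf e hce heo ?_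
  intro x hx hxe
  by_cases hxm : x ∈ mVerts fst snd M
  · exact heo x hxe hxm
  · exact hue (hu_uniq x hx hxm ▸ hxe)

lemma aux_percolor
    (hloop : ∀ e : E, fst e ≠ snd e)
    (hproper : ∀ e f : E, e ≠ f →
      (endpts fst snd e ∩ endpts fst snd f).Nonempty → col e ≠ col f)
    (M : Finset E) (hM : IsRainbowMatching fst snd col M)
    (hMmax : ∀ S : Finset E, IsRainbowMatching fst snd col S → S.card ≤ M.card)
    (ε : ℝ) (n : ℕ)
    (habund : ∀ c : C, (1+ε) * n ≤ ((Finset.univ.filter fun e : E => col e = c).card : ℝ))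
    (hMb : (M.card : ℝ) + 1 + ε * n / 2 ≤ (1+ε) * n)
    (g : E) (hg : g ∈ M) (v : V) (hv : v ∈ endpts fst snd g)
    (hdeg : 0 < extC0deg fst snd col M v) :
    ε * n / 2 ≤ ((Finset.univ.filter fun e : E =>
      col e = col g ∧ IsExternal fst snd M e).card : ℝ) := by
  classical
  set A := Finset.univ.filter fun e : E => col e = col g with hA
  set AE := Finset.univ.filter (fun e : E => col e = col g ∧ IsExternal fst snd M e) with hAE
  set AI := Finset.univ.filter (fun e : E => col e = col g ∧
    fst e ∈ mVerts fst snd M ∧ snd e ∈ mVerts fst snd M) with hAI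
  set AO := Finset.univ.filter (fun e : E => col e = col g ∧
    ∀ x ∈ endpts fst snd e, x ∉ mVerts fst snd M) with hAO
  have hsub : A ⊆ (AE ∪ AI) ∪ AO := by
    intro e he
    rw [hA, Finset.mem_filter] at he
    simp only [Finset.mem_union, hAE, hAI, hAO, Finset.mem_filter, Finset.mem_univ, true_and]
    by_cases h1 : fst e ∈ mVerts fst snd M <;> by_cases h2 : snd e ∈ mVerts fst snd M
    · exact Or.inl (Or.inr ⟨he.2, h1, h2⟩)
    · exact Or.inl (Or.inl ⟨he.2, Or.inl ⟨h1, h2⟩⟩)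
    · exact Or.inl (Or.inl ⟨he.2, Or.inr ⟨h1, h2⟩⟩)
    · refine Or.inr ⟨he.2, fun x hx => ?_⟩
      rcases (aux_mem_endpts fst snd x e).1 hx with h | h
      · exact h ▸ h1
      · exact h ▸ h2
  have hAOcard : AO.card ≤ 1 := aux_out_le_one fst snd col hproper M hM hMmax g hg v hv hdeg
  have hAIcard : AI.card ≤ M.card := by
    have hdisj : ∀ e₁ ∈ AI, ∀ e₂ ∈ AI, e₁ ≠ e₂ →
        Disjoint (endpts fst snd e₁) (endpts fst snd e₂) := by
      intro e₁ he₁ e₂ he₂ hne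
      rw [hAI, Finset.mem_filter] at he₁ he₂
      rw [Finset.disjoint_left]
      intro x hx1 hx2
      exact hproper e₁ e₂ hne ⟨x, Finset.mem_inter.2 ⟨hx1, hx2⟩⟩
        (he₁.2.1.trans he₂.2.1.symm)
    have hbi : (AI.biUnion (endpts fst snd)).card = 2 * AI.card := by
      rw [Finset.card_biUnion hdisj]
      have h2 : ∀ e ∈ AI, (endpts fst snd e).card = 2 := by
        intro e _; show ({fst e, snd e} : Finset V).card = 2
        exact Finset.card_pair (hloop e)
      rw [Finset.sum_congr rfl h2]
      simp [mul_comm]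
    have hsubm : AI.biUnion (endpts fst snd) ⊆ mVerts fst snd M := by
      apply Finset.biUnion_subset.2
      intro e he
      rw [hAI, Finset.mem_filter] at he
      intro x hx
      rcases (aux_mem_endpts fst snd x e).1 hx with h | h
      · exact h ▸ he.2.2.1
      · exact h ▸ he.2.2.2
    have hmv : (mVerts fst snd M).card ≤ 2 * M.card := by
      calc (mVerts fst snd M).card ≤ ∑ e ∈ M, (endpts fst snd e).card :=
            Finset.card_biUnion_le
        _ = ∑ _e ∈ M, 2 := Finset.sum_congr rfl (by
            intro e _; show ({fst e, snd e} : Finset V).card = 2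
            exact Finset.card_pair (hloop e))
        _ = 2 * M.card := by simp [mul_comm]
    have := (Finset.card_le_card hsubm).trans hmv
    omega
  have hAcard : A.card ≤ AE.card + M.card + 1 := by
    have h1 : A.card ≤ ((AE ∪ AI) ∪ AO).card := Finset.card_le_card hsub
    have h2 : ((AE ∪ AI) ∪ AO).card ≤ (AE ∪ AI).card + AO.card := Finset.card_union_le _ _
    have h3 : (AE ∪ AI).card ≤ AE.card + AI.card := Finset.card_union_le _ _
    omega
  have habA : (1+ε) * n ≤ (A.card : ℝ) := habund (col g)
  have : (A.card : ℝ) ≤ (AE.card : ℝ) + M.card + 1 := by exact_mod_cast hAcard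
  linarith

end Aux2


/-- There are at least `ε|F|n/2` external `F`-edges. -/
theorem stmt5
    {V E C : Type*} [Fintype V] [DecidableEq V] [Fintype E] [DecidableEq E]
    [Fintype C] [DecidableEq C]
    (ε k α : ℝ) (hε0 : 0 < ε) (hε1 : ε < 1/1000)
    (hk : k = (2:ℝ) ^ (20/ε)) (hα : α = ε/12)
    (n : ℕ) (hn : (n:ℝ) > k^2)
    (fst snd : E → V) (col : E → C)
    (hloop : ∀ e : E, fst e ≠ snd e)
    (hproper : ∀ e f : E, e ≠ f → (endpts fst snd e ∩ endpts fst snd f).Nonempty →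
      col e ≠ col f)
    (hC : Fintype.card C = n)
    (hmult : ∀ u v : V,
      ((Finset.univ.filter fun e : E => endpts fst snd e = ({u, v} : Finset V)).card : ℝ) ≤ n / k)
    (habund : ∀ c : C, (1+ε) * n ≤ ((Finset.univ.filter fun e : E => col e = c).card : ℝ))
    (M : Finset E) (hM : IsRainbowMatching fst snd col M)
    (hMmax : ∀ S : Finset E, IsRainbowMatching fst snd col S → S.card ≤ M.card)
    (hMlt : (M.card : ℝ) < n - k)
    :
    ε * ((Fcols fst snd col M α).card : ℝ) * n / 2 ≤
      ((Finset.univ.filter fun e : E =>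
        IsExternal fst snd M e ∧ col e ∈ Fcols fst snd col M α).card : ℝ) := by
  
  classical
  -- basic numeric facts
  have hk1 : (1:ℝ) ≤ k := by
    rw [hk]
    calc (1:ℝ) = (2:ℝ) ^ (0:ℝ) := (Real.rpow_zero 2).symm
      _ ≤ (2:ℝ) ^ (20/ε) := Real.rpow_le_rpow_of_exponent_le one_le_two (by positivity)
  have hn0 : (0:ℝ) ≤ (n:ℝ) := Nat.cast_nonneg n
  have hεn : (0:ℝ) ≤ ε * n := mul_nonneg hε0.le hn0
  have hMb : (M.card : ℝ) + 1 + ε * n / 2 ≤ (1+ε) * n := by nlinarith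
  have hα0 : 0 < α := by rw [hα]; linarith
  have hMn : M.card < n := by
    have : (M.card : ℝ) < (n:ℝ) := by linarith
    exact_mod_cast this
  have hC0pos : 0 < (C0 col M).card := by
    have h1 : (mCols col M).card ≤ M.card := Finset.card_image_le
    have h2 : (C0 col M).card = Fintype.card C - (mCols col M).card := by
      rw [C0, Finset.card_sdiff_of_subset (Finset.subset_univ _), Finset.card_univ]
    rw [h2, hC]
    omega
  -- per-colour bound
  have hper : ∀ c ∈ Fcols fst snd col M α, ε * n / 2 ≤
      ((Finset.univ.filter fun e : E => col e = c ∧ IsExternal fst snd M e).card : ℝ) := by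
    intro c hc
    obtain ⟨g, hgE0, hgc⟩ := Finset.mem_image.1 hc
    rw [E0, Finset.mem_filter] at hgE0
    obtain ⟨hgM, v, hv, hvdeg⟩ := hgE0
    have hdegpos : 0 < extC0deg fst snd col M v := by
      have h1 : (0:ℝ) < α * ((C0 col M).card : ℝ) := by
        apply mul_pos hα0
        exact_mod_cast hC0pos
      have : (0:ℝ) < (extC0deg fst snd col M v : ℝ) := lt_of_lt_of_le h1 hvdeg
      exact_mod_cast this
    have := aux_percolor fst snd col hloop hproper M hM hMmax ε n habund hMb g hgM v hv hdegpos
    rwa [hgc] at this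
  -- decompose the external F-edges by colour
  set F := Fcols fst snd col M α with hF
  set B : C → Finset E := fun c =>
    Finset.univ.filter (fun e : E => col e = c ∧ IsExternal fst snd M e) with hB
  have hS : (Finset.univ.filter fun e : E =>
      IsExternal fst snd M e ∧ col e ∈ F) = F.biUnion B := by
    ext e
    simp only [Finset.mem_filter, Finset.mem_univ, true_and, Finset.mem_biUnion, hB]
    constructor
    · rintro ⟨hext, hcf⟩
      exact ⟨col e, hcf, rfl, hext⟩
    · rintro ⟨c, hc, rfl, hext⟩
      exact ⟨hext, hc⟩
  have hdisjB : ∀ c ∈ F, ∀ c' ∈ F, c ≠ c' → Disjoint (B c) (B c') := by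
    intro c _ c' _ hne
    rw [Finset.disjoint_left]
    intro e he he'
    rw [hB, Finset.mem_filter] at he he'
    exact hne (he.2.1.symm.trans he'.2.1)
  have hcards : ((Finset.univ.filter fun e : E =>
      IsExternal fst snd M e ∧ col e ∈ F).card : ℝ) = ∑ c ∈ F, ((B c).card : ℝ) := by
    rw [hS, Finset.card_biUnion hdisjB]
    push_cast
    rfl
  rw [hcards]
  have hsum : (F.card : ℝ) * (ε * n / 2) ≤ ∑ c ∈ F, ((B c).card : ℝ) := by
    calc (F.card : ℝ) * (ε * n / 2) = ∑ _c ∈ F, ε * n / 2 := by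
          rw [Finset.sum_const, nsmul_eq_mul]
      _ ≤ ∑ c ∈ F, ((B c).card : ℝ) := Finset.sum_le_sum hper
  calc ε * (F.card : ℝ) * n / 2 = (F.card : ℝ) * (ε * n / 2) := by ring
    _ ≤ _ := hsum
end

section
/- For each colour c ∈ F, the number of bad external edges of colour c is at most 2/α. -/
/-
A multigraph on vertex type `V` is given by an edge type `E` with two endpoint
maps `fst snd : E → V` (no loops: `fst e ≠ snd e`); parallel edges are allowed
since distinct elements of `E` may have the same endpoints.  A colouring
`col : E → C` by a set `C` of `n` colours is proper if any two distinct edges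
sharing a vertex get distinct colours.
-/

attribute [local instance] Classical.propDecidable

/-- For each colour `c ∈ F` there are at most `2/α` bad external `c`-edges. -/
theorem stmt6
    {V E C : Type*} [Fintype V] [DecidableEq V] [Fintype E] [DecidableEq E]
    [Fintype C] [DecidableEq C]
    (ε k α : ℝ) (hε0 : 0 < ε) (hε1 : ε < 1/1000)
    (hk : k = (2:ℝ) ^ (20/ε)) (hα : α = ε/12)
    (n : ℕ) (hn : (n:ℝ) > k^2)
    (fst snd : E → V) (col : E → C)
    (hloop : ∀ e : E, fst e ≠ snd e)
    (hproper : ∀ e f : E, e ≠ f → (endpts fst snd e ∩ endpts fst snd f).Nonempty →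
      col e ≠ col f)
    (hC : Fintype.card C = n)
    (hmult : ∀ u v : V,
      ((Finset.univ.filter fun e : E => endpts fst snd e = ({u, v} : Finset V)).card : ℝ) ≤ n / k)
    (habund : ∀ c : C, (1+ε) * n ≤ ((Finset.univ.filter fun e : E => col e = c).card : ℝ))
    (M : Finset E) (hM : IsRainbowMatching fst snd col M)
    (hMmax : ∀ S : Finset E, IsRainbowMatching fst snd col S → S.card ≤ M.card)
    (hMlt : (M.card : ℝ) < n - k)
    :
    ∀ c ∈ Fcols fst snd col M α,
      ((Finset.univ.filter fun e : E => IsExternal fst snd M e ∧ col e = c ∧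
        ¬ IsGood fst snd col M α e).card : ℝ) ≤ 2 / α := by
  intro c hc
  have hα0 : (0:ℝ) < α := by rw [hα]; linarith
  have hkpos : (0:ℝ) < k := by rw [hk]; positivity
  -- extract an edge g of M of colour c witnessing flexibility
  have hc' := hc
  rw [Fcols, mCols, Finset.mem_image] at hc'
  obtain ⟨g, hgE0, hgc⟩ := hc'
  simp only [E0, Finset.mem_filter] at hgE0
  obtain ⟨hgM, v, hv, hvdeg⟩ := hgE0
  -- |C₀| > 0
  have hMn : M.card < n := by
    have : (M.card : ℝ) < n := by linarith
    exact_mod_cast this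
  have hC0pos : 0 < (C0 col M).card := by
    have h1 : (C0 col M).card = Fintype.card C - (mCols col M).card := by
      rw [C0, Finset.card_sdiff_of_subset (Finset.subset_univ _), Finset.card_univ]
    have h2 : (mCols col M).card ≤ M.card := Finset.card_image_le
    rw [h1, hC]; omega
  set A := Finset.univ.filter (fun f : E => IsExternal fst snd M f ∧ col f ∈ C0 col M ∧
      (endpts fst snd f ∩ endpts fst snd g).Nonempty) with hAdef
  set B := Finset.univ.filter (fun e : E => IsExternal fst snd M e ∧ col e = c ∧
      ¬ IsGood fst snd col M α e) with hBdef
  -- α|C₀| ≤ |A|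
  have hAge : α * ((C0 col M).card : ℝ) ≤ (A.card : ℝ) := by
    refine le_trans hvdeg ?_
    rw [extC0deg]
    have hsub : (Finset.univ.filter fun f : E => IsExternal fst snd M f ∧ col f ∈ C0 col M ∧
        v ∈ endpts fst snd f) ⊆ A := by
      intro f hf
      simp only [hAdef, Finset.mem_filter] at hf ⊢
      exact ⟨hf.1, hf.2.1, hf.2.2.1, ⟨v, Finset.mem_inter.mpr ⟨hf.2.2.2, hv⟩⟩⟩
    exact_mod_cast Finset.card_le_card hsub
  have hApos : (0:ℝ) < (A.card : ℝ) := by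
    have : (0:ℝ) < α * ((C0 col M).card : ℝ) := by
      have : (0:ℝ) < ((C0 col M).card : ℝ) := by exact_mod_cast hC0pos
      positivity
    linarith
  -- per-bad-edge estimate
  have key : ∀ e ∈ B, (A.card : ℝ) ≤
      2 * ((A.filter (fun f => (endpts fst snd f ∩ endpts fst snd e).Nonempty)).card : ℝ) := by
    intro e he
    simp only [hBdef, Finset.mem_filter] at he
    obtain ⟨-, hext, hcolc, hng⟩ := he
    have hbad : ((Finset.univ.filter fun f : E => IsExternal fst snd M f ∧ col f ∈ C0 col M ∧
        (endpts fst snd f ∩ endpts fst snd g).Nonempty ∧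
        endpts fst snd f ∩ endpts fst snd e = ∅).card : ℝ) < α * ((C0 col M).card : ℝ) / 2 := by
      by_contra hle
      push_neg at hle
      exact hng ⟨hext, by rw [hcolc]; exact hc, g, hgM, by rw [hgc, hcolc], hle⟩
    have hpart := Finset.card_filter_add_card_filter_not (s := A)
      (p := fun f => (endpts fst snd f ∩ endpts fst snd e).Nonempty)
    have hsub : A.filter (fun f => ¬ (endpts fst snd f ∩ endpts fst snd e).Nonempty) ⊆
        (Finset.univ.filter fun f : E => IsExternal fst snd M f ∧ col f ∈ C0 col M ∧
          (endpts fst snd f ∩ endpts fst snd g).Nonempty ∧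
          endpts fst snd f ∩ endpts fst snd e = ∅) := by
      intro f hf
      simp only [hAdef, Finset.mem_filter, Finset.not_nonempty_iff_eq_empty] at hf ⊢
      exact ⟨Finset.mem_univ f, hf.1.2.1, hf.1.2.2.1, hf.1.2.2.2, hf.2⟩
    have hDle : ((A.filter (fun f => ¬ (endpts fst snd f ∩ endpts fst snd e).Nonempty)).card : ℝ)
        < α * ((C0 col M).card : ℝ) / 2 := by
      refine lt_of_le_of_lt ?_ hbad
      exact_mod_cast Finset.card_le_card hsub
    have hpartR : ((A.filter (fun f => (endpts fst snd f ∩ endpts fst snd e).Nonempty)).card : ℝ)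
        + ((A.filter (fun f => ¬ (endpts fst snd f ∩ endpts fst snd e).Nonempty)).card : ℝ)
        = (A.card : ℝ) := by exact_mod_cast hpart
    linarith
  -- double counting: each edge of A touches at most 2 bad c-edges
  have hswap : ∑ e ∈ B, (A.filter (fun f => (endpts fst snd f ∩ endpts fst snd e).Nonempty)).card
      ≤ 2 * A.card := by
    have h2 : ∀ f ∈ A, (B.filter (fun e =>
        (endpts fst snd f ∩ endpts fst snd e).Nonempty)).card ≤ 2 := by
      intro f _
      have hcard2 : (endpts fst snd f).card ≤ 2 := by
        rw [endpts]
        exact (Finset.card_insert_le _ _).trans (by simp)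
      have hmem : ∀ e : E, (endpts fst snd f ∩ endpts fst snd e).Nonempty →
          (if fst f ∈ endpts fst snd e then fst f else snd f) ∈ endpts fst snd e := by
        intro e hne
        by_cases h : fst f ∈ endpts fst snd e
        · simpa [h]
        · obtain ⟨w, hw⟩ := hne
          rw [Finset.mem_inter] at hw
          have hw1 : w = fst f ∨ w = snd f := by
            simpa [endpts] using hw.1
          rcases hw1 with h1 | h2
          · exact absurd (h1 ▸ hw.2) h
          · simpa [h] using h2 ▸ hw.2
      refine le_trans (Finset.card_le_card_of_injOn
        (fun e => if fst f ∈ endpts fst snd e then fst f else snd f) ?_ ?_) hcard2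
      · intro e _
        show (if fst f ∈ endpts fst snd e then fst f else snd f) ∈ endpts fst snd f
        split <;> simp [endpts]
      · intro e1 h1 e2 h2 heq
        simp only [Finset.coe_filter, Set.mem_setOf_eq, hBdef, Finset.mem_filter] at h1 h2
        by_contra hne
        have hw1 : (if fst f ∈ endpts fst snd e1 then fst f else snd f) ∈ endpts fst snd e1 :=
          hmem e1 h1.2
        have hw2 : (if fst f ∈ endpts fst snd e2 then fst f else snd f) ∈ endpts fst snd e2 :=
          hmem e2 h2.2
        have heq' : (if fst f ∈ endpts fst snd e1 then fst f else snd f)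
            = (if fst f ∈ endpts fst snd e2 then fst f else snd f) := heq
        have hnonem : (endpts fst snd e1 ∩ endpts fst snd e2).Nonempty :=
          ⟨_, Finset.mem_inter.mpr ⟨hw1, heq' ▸ hw2⟩⟩
        exact hproper e1 e2 hne hnonem (h1.1.2.2.1.trans h2.1.2.2.1.symm)
    calc ∑ e ∈ B, (A.filter (fun f => (endpts fst snd f ∩ endpts fst snd e).Nonempty)).card
        = ∑ f ∈ A, (B.filter (fun e =>
            (endpts fst snd f ∩ endpts fst snd e).Nonempty)).card := by
          simp_rw [Finset.card_filter]
          exact Finset.sum_comm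
      _ ≤ ∑ _f ∈ A, 2 := Finset.sum_le_sum h2
      _ = 2 * A.card := by rw [Finset.sum_const]; ring
  -- combine in ℝ
  have hswapR : (∑ e ∈ B, ((A.filter (fun f =>
      (endpts fst snd f ∩ endpts fst snd e).Nonempty)).card : ℝ)) ≤ 2 * (A.card : ℝ) := by
    exact_mod_cast hswap
  have hsumR : (B.card : ℝ) * (A.card : ℝ) ≤ 4 * (A.card : ℝ) := by
    have h1 : (B.card : ℝ) * (A.card : ℝ) = ∑ _e ∈ B, (A.card : ℝ) := by
      rw [Finset.sum_const]; ring
    have h2 : (∑ _e ∈ B, (A.card : ℝ)) ≤ ∑ e ∈ B, 2 * ((A.filter (fun f =>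
        (endpts fst snd f ∩ endpts fst snd e).Nonempty)).card : ℝ) :=
      Finset.sum_le_sum key
    rw [h1]
    calc (∑ _e ∈ B, (A.card : ℝ)) ≤ _ := h2
      _ = 2 * ∑ e ∈ B, ((A.filter (fun f =>
          (endpts fst snd f ∩ endpts fst snd e).Nonempty)).card : ℝ) := by
          rw [Finset.mul_sum]
      _ ≤ 2 * (2 * (A.card : ℝ)) := by linarith
      _ = 4 * (A.card : ℝ) := by ring
  have hB4 : (B.card : ℝ) ≤ 4 := by nlinarith
  have h42 : (4:ℝ) ≤ 2 / α := by
    rw [le_div_iff₀ hα0, hα]; nlinarith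
  calc ((Finset.univ.filter fun e : E => IsExternal fst snd M e ∧ col e = c ∧
        ¬ IsGood fst snd col M α e).card : ℝ) = (B.card : ℝ) := by rw [hBdef]
    _ ≤ 4 := hB4
    _ ≤ 2 / α := h42
end
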